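/- Let F be a field, D a derivation on F with constant field C, and ω_1,…,ω_n closed Kähler differentials in Ω(F/C) with D*ω_i = 0 for each i. If Σ α_i ω_i = 0 is an F-linear dependence with some α_{i_0} = 1 that is minimal (the forms with nonzero coefficient span a space of dimension one less than their number), then all α_i lie in C. -/

import Mathlib

/-!
Applying `d` to `∑ αᵢ ωᵢ = 0` and using that the `ωᵢ` are closed gives `∑ dαᵢ ∧ ωᵢ = 0`;
contracting with `D*` and using `D*ωᵢ = 0` gives `∑ (Dαᵢ) ωᵢ = 0`. Minimality means the relations
among the `ωᵢ` with `αᵢ ≠ 0` form a line, so `(Dαᵢ)ᵢ = c (αᵢ)ᵢ`; comparing the `i₀`-th entries,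
`c = D 1 = 0`, hence every `αᵢ` is a constant.
-/

open ExteriorAlgebra

section LinearAlgebra

open Module Submodule

variable {ι K M : Type*} [Fintype ι] [Field K] [AddCommGroup M] [Module K M]

theorem Fintype.sum_subtype_eq_sum_of_eq_zero {N : Type*} [AddCommMonoid N]
    {p : ι → Prop} [DecidablePred p] (f : ι → N) (h : ∀ i, ¬p i → f i = 0) :
    ∑ i : Subtype p, f i = ∑ i, f i := by
  rw [← Finset.sum_subtype (Finset.univ.filter p) (by simp), Finset.sum_filter_of_ne]
  exact fun i _ hfi => by_contra fun hpi => hfi (h i hpi)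

theorem exists_eq_smul_of_finrank_span_range_eq_card_sub_one (v : ι → M) {a b : ι → K}
    (ha : ∑ i, a i • v i = 0) (hb : ∑ i, b i • v i = 0) (ha₀ : a ≠ 0)
    (hrank : finrank K (span K (Set.range v)) = Fintype.card ι - 1) :
    ∃ c : K, b = c • a := by
  let L := Fintype.linearCombination K v
  have hcard : 0 < Fintype.card ι := by
    obtain ⟨i, -⟩ := Function.ne_iff.mp ha₀
    exact Fintype.card_pos_iff.mpr ⟨i⟩
  have hker : finrank K (LinearMap.ker L) = 1 := by
    have := L.finrank_range_add_finrank_ker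
    rw [Fintype.range_linearCombination, hrank, finrank_fintype_fun_eq_card] at this
    omega
  have haL : a ∈ LinearMap.ker L := by simpa [L, Fintype.linearCombination_apply] using ha
  have hbL : b ∈ LinearMap.ker L := by simpa [L, Fintype.linearCombination_apply] using hb
  obtain ⟨c, hc⟩ := (finrank_eq_one_iff_of_nonzero' (⟨a, haL⟩ : LinearMap.ker L)
    (by simpa using ha₀)).mp hker ⟨b, hbL⟩
  exact ⟨c, congrArg Subtype.val hc.symm⟩

theorem exists_eq_smul_of_minimal_dependence (v : ι → M) {a b : ι → K}
    (ha : ∑ i, a i • v i = 0) (hb : ∑ i, b i • v i = 0) (hsupp : ∀ i, a i = 0 → b i = 0)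
    (hmin : finrank K (span K (v '' {i | a i ≠ 0})) = {i | a i ≠ 0}.ncard - 1) :
    ∃ c : K, b = c • a := by
  classical
  by_cases ha₀ : a = 0
  · exact ⟨0, funext fun i => by simp [hsupp i (congrFun ha₀ i)]⟩
  set s := {i | a i ≠ 0}
  obtain ⟨c, hc⟩ := exists_eq_smul_of_finrank_span_range_eq_card_sub_one (fun i : s => v i)
    (a := fun i => a i) (b := fun i => b i)
    (by rwa [Fintype.sum_subtype_eq_sum_of_eq_zero (fun i => a i • v i)
      fun i hi => by rw [not_not.mp hi, zero_smul]])
    (by rwa [Fintype.sum_subtype_eq_sum_of_eq_zero (fun i => b i • v i)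
      fun i hi => by rw [hsupp i (not_not.mp hi), zero_smul]])
    (fun h => ha₀ (funext fun i => by_contra fun hi => hi (congrFun h ⟨i, hi⟩)))
    (by rwa [← Set.image_eq_range, ← Set.toFinset_card, ← Set.ncard_eq_toFinset_card'])
  refine ⟨c, funext fun i => ?_⟩
  by_cases hi : a i = 0
  · simp [hi, hsupp i hi]
  · exact congrFun hc ⟨i, hi⟩

end LinearAlgebra

section DifferentialForms

open KaehlerDifferential

variable {R S : Type*} [CommRing R] [CommRing S] [Algebra R S]

def IsExteriorDerivative (d : Ω[S⁄R] →ₗ[R] ExteriorAlgebra S Ω[S⁄R]) : Prop :=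
  ∀ a b : S, d (a • D R S b) = ι S (D R S a) * ι S (D R S b)

def IsInteriorProduct (δ : Derivation R S S) (i : ExteriorAlgebra S Ω[S⁄R] →ₗ[S] Ω[S⁄R]) :
    Prop :=
  ∀ ω η : Ω[S⁄R], i (ι S ω * ι S η) =
    δ.liftKaehlerDifferential ω • η - δ.liftKaehlerDifferential η • ω

namespace IsExteriorDerivative

variable {d : Ω[S⁄R] →ₗ[R] ExteriorAlgebra S Ω[S⁄R]}

theorem map_D (hd : IsExteriorDerivative d) (b : S) : d (D R S b) = 0 := by
  simpa using hd 1 b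

theorem leibniz (hd : IsExteriorDerivative d) (a : S) (w : Ω[S⁄R]) :
    d (a • w) = ι S (D R S a) * ι S w + a • d w := by
  have hw : w ∈ Submodule.span S (Set.range (D R S)) := by
    rw [span_range_derivation]; trivial
  induction hw using Submodule.span_induction generalizing a with
  | mem x hx =>
    obtain ⟨b, rfl⟩ := hx
    rw [hd, hd.map_D, smul_zero, add_zero]
  | zero => simp
  | add x y _ _ ihx ihy =>
    rw [smul_add, map_add, ihx, ihy, map_add, map_add, mul_add, smul_add]
    abel
  | smul c x _ ih =>
    rw [smul_smul, ih, Derivation.leibniz, map_add, LinearMap.map_smul, LinearMap.map_smul,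
      add_mul, smul_mul_assoc, smul_mul_assoc, ih, LinearMap.map_smul (ι S) c x, mul_smul_comm]
    module

theorem map_sum_smul_of_closed (hd : IsExteriorDerivative d) {κ : Type*} (s : Finset κ)
    (a : κ → S) (ω : κ → Ω[S⁄R]) (hω : ∀ j ∈ s, d (ω j) = 0) :
    d (∑ j ∈ s, a j • ω j) = ∑ j ∈ s, ι S (D R S (a j)) * ι S (ω j) := by
  rw [map_sum]
  refine Finset.sum_congr rfl fun j hj => ?_
  rw [hd.leibniz, hω j hj, smul_zero, add_zero]

end IsExteriorDerivative

theorem IsInteriorProduct.map_sum_ι_D_mul_ι {δ : Derivation R S S}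
    {i : ExteriorAlgebra S Ω[S⁄R] →ₗ[S] Ω[S⁄R]} (hi : IsInteriorProduct δ i) {κ : Type*}
    (s : Finset κ) (a : κ → S) (ω : κ → Ω[S⁄R])
    (hω : ∀ j ∈ s, δ.liftKaehlerDifferential (ω j) = 0) :
    i (∑ j ∈ s, ι S (D R S (a j)) * ι S (ω j)) = ∑ j ∈ s, δ (a j) • ω j := by
  rw [map_sum]
  refine Finset.sum_congr rfl fun j hj => ?_
  rw [hi, hω j hj, Derivation.liftKaehlerDifferential_comp_D, zero_smul, sub_zero]

end DifferentialForms

/-- If `ω₁, …, ωₙ` are closed Kähler differentials in `Ω(F/C)` annihilated by `D*`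
(where `C` is the constant field of the derivation `D`), and `∑ αᵢ ωᵢ = 0` is a minimal
`F`-linear dependence with some coefficient equal to `1`, then all `αᵢ` lie in `C`.

Here the de Rham differential `d : Ω¹(F/C) → Ω²(F/C)` (valued in the exterior algebra
of `Ω(F/C)` over `F`) is characterised by `C`-linearity and `d(a · db) = da ∧ db`,
and the degree `-1` interior product `D*` in degree `2` is characterised by
`D*(ω ∧ η) = (D*ω) η − (D*η) ω`, where in degree `1` the interior product `D*` is the
`F`-linear functional on `Ω(F/C)` induced by `D`. -/
theorem minimal_dependence_has_constant_coefficients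
    {F : Type*} [Field F] (C : Subfield F)
    (D : Derivation ↥C F F)
    (hC : ∀ a : F, D a = 0 → a ∈ C)
    (dOne : Ω[F⁄↥C] →ₗ[↥C] ExteriorAlgebra F (Ω[F⁄↥C]))
    (hdOne : ∀ a b : F, dOne (a • KaehlerDifferential.D ↥C F b) =
      ι F (KaehlerDifferential.D ↥C F a) * ι F (KaehlerDifferential.D ↥C F b))
    (Dstar2 : ExteriorAlgebra F (Ω[F⁄↥C]) →ₗ[F] Ω[F⁄↥C])
    (hDstar2 : ∀ ω η : Ω[F⁄↥C], Dstar2 (ι F ω * ι F η) =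
      D.liftKaehlerDifferential ω • η - D.liftKaehlerDifferential η • ω)
    (n : ℕ) (ω : Fin n → Ω[F⁄↥C])
    (hclosed : ∀ i, dOne (ω i) = 0)
    (hDstar : ∀ i, D.liftKaehlerDifferential (ω i) = 0)
    (α : Fin n → F) (i₀ : Fin n) (hα₀ : α i₀ = 1)
    (hdep : ∑ i, α i • ω i = 0)
    (hmin : Module.finrank F ↥(Submodule.span F (ω '' {i | α i ≠ 0})) =
      {i | α i ≠ 0}.ncard - 1) :
    ∀ i, α i ∈ C := by
  -- A `calc` rather than `rw`: the `C`-module structure on `Ω[F⁄C]` in the statement is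
  -- restricted from `F`, and only defeq to the one `IsExteriorDerivative` is stated with.
  have hdα : ∑ i, ι F (KaehlerDifferential.D C F (α i)) * ι F (ω i) = 0 :=
    calc _ = dOne (∑ i, α i • ω i) :=
          (IsExteriorDerivative.map_sum_smul_of_closed hdOne _ _ _ fun i _ => hclosed i).symm
      _ = 0 := by rw [hdep, map_zero]
  have hDα : ∑ i, D (α i) • ω i = 0 := by
    rw [← IsInteriorProduct.map_sum_ι_D_mul_ι hDstar2 _ _ _ fun i _ => hDstar i, hdα, map_zero]
  obtain ⟨c, hc⟩ := exists_eq_smul_of_minimal_dependence ω hdep hDα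
    (fun i hi => by rw [hi, map_zero]) hmin
  have hc₀ : c = 0 := by simpa [hα₀] using (congrFun hc i₀).symm
  intro i
  exact hC (α i) (by simpa [hc₀] using congrFun hc i)
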